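/- If w(h₂) = w(h₁) for some h₁, h₂ ∈ [0,m], then x_+(h₂) = x_+(h₁) and x_−(h₂) = x_−(h₁); thus x_+(h) and x_−(h) are uniquely determined by w(h). Moreover, there exist functions c ≤ 0 and d ≥ 0 on V ∪ {0}, with −c and d nonnegative, nondecreasing, and continuous, vanishing only at 0, and Lipschitz with Lipschitz constant ≤ 1, such that for all h ∈ [0,m]: x_+(h) = d(w(h)), x_−(h) = c(w(h)), and d(w(h)) − c(w(h)) = w(h). -/
import Mathlib


open MeasureTheory ProbabilityTheory Set Filter Function
open scoped ENNReal NNReal Topology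

noncomputable section

namespace PinelisTtest

variable {Ω : Type*} [MeasurableSpace Ω]

/-- The function `G` from the paper: `G x = E[X 1{X ∈ (0,x]}]` for `x ≥ 0`,
`G x = E[(-X) 1{X ∈ [x,0)}]` for `x < 0`. -/
def G (P : Measure Ω) (X : Ω → ℝ) (x : ℝ) : ℝ :=
  if 0 ≤ x then ∫ ω, (if X ω ∈ Set.Ioc (0:ℝ) x then X ω else 0) ∂P
  else ∫ ω, (if X ω ∈ Set.Ico x (0:ℝ) then -(X ω) else 0) ∂P

/-- `m := (1/2) E|X|`. -/
def mHalf (P : Measure Ω) (X : Ω → ℝ) : ℝ := (1/2) * ∫ ω, |X ω| ∂P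

/-- `G` extended to `[-∞,∞]`, with `G(±∞) = m`. -/
def Gbar (P : Measure Ω) (X : Ω → ℝ) (x : EReal) : ℝ :=
  if x = ⊤ ∨ x = ⊥ then mHalf P X else G P X x.toReal

/-- `x_+(h) := inf {x ∈ [0,∞] : G(x) ≥ h}`. -/
def xPlus (P : Measure Ω) (X : Ω → ℝ) (h : ℝ) : EReal :=
  sInf {x : EReal | 0 ≤ x ∧ h ≤ Gbar P X x}

/-- `x_-(h) := sup {x ∈ [-∞,0] : G(x) ≥ h}`. -/
def xMinus (P : Measure Ω) (X : Ω → ℝ) (h : ℝ) : EReal :=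
  sSup {x : EReal | x ≤ 0 ∧ h ≤ Gbar P X x}

/-- `w(h) := x_+(h) - x_-(h)`. -/
def wFun (P : Measure Ω) (X : Ω → ℝ) (h : ℝ) : EReal := xPlus P X h - xMinus P X h

/-- `V := {w(h) : h ∈ (0,m]}`. -/
def V (P : Measure Ω) (X : Ω → ℝ) : Set EReal := wFun P X '' Set.Ioc 0 (mHalf P X)

/-- `h_+(x,u) := G(x-) + u (G(x) - G(x-))`. -/
def hPlus (P : Measure Ω) (X : Ω → ℝ) (x u : ℝ) : ℝ :=
  leftLim (G P X) x + u * (G P X x - leftLim (G P X) x)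

/-- `h_-(x,u) := G(x+) + u (G(x) - G(x+))`. -/
def hMinus (P : Measure Ω) (X : Ω → ℝ) (x u : ℝ) : ℝ :=
  rightLim (G P X) x + u * (G P X x - rightLim (G P X) x)

/-- `H(x,u)`. -/
def H (P : Measure Ω) (X : Ω → ℝ) (x u : ℝ) : ℝ :=
  if 0 ≤ x then hPlus P X x u else hMinus P X x u

/-- The reciprocating function `r(x,u)` (real-valued; the extended value is converted
by `EReal.toReal`, which only matters off the almost-sure good set). -/
def recip (P : Measure Ω) (X : Ω → ℝ) (x u : ℝ) : ℝ :=
  if 0 ≤ x then (xMinus P X (H P X x u)).toReal else (xPlus P X (H P X x u)).toReal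

/-- `U_X(ω) := U(ω)` if `P(X = X(ω)) ≠ 0`, and `:= 1` otherwise. -/
def UX (P : Measure Ω) (X U : Ω → ℝ) (ω : Ω) : ℝ :=
  if P {ω' | X ω' = X ω} ≠ 0 then U ω else 1

/-- `W := |X - r(X, U_X)|`. -/
def W (P : Measure Ω) (X U : Ω → ℝ) (ω : Ω) : ℝ :=
  |X ω - recip P X (X ω) (UX P X U ω)|

/-- `Y := |X ⬝ r(X, U_X)|`. -/
def Yf (P : Measure Ω) (X U : Ω → ℝ) (ω : Ω) : ℝ :=
  |X ω * recip P X (X ω) (UX P X U ω)|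

/-- `U` is uniformly distributed on `[0,1]`. -/
def IsUniform01 (P : Measure Ω) (U : Ω → ℝ) : Prop :=
  P.map U = volume.restrict (Set.Icc (0:ℝ) 1)

/-- `M_+`. -/
def Mplus (P : Measure Ω) (X : Ω → ℝ) : Set ℝ :=
  {x | 0 < x ∧ ∀ y < x, 0 < P {ω | X ω ∈ Set.Ioc y x}}

/-- `N_+`. -/
def Nplus (P : Measure Ω) (X : Ω → ℝ) : Set ℝ :=
  {x | 0 < x ∧ P {ω | X ω = x} = 0}

/-- `L_+`. -/
def Lplus (P : Measure Ω) (X : Ω → ℝ) : Set ℝ :=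
  {x | 0 < x ∧ ∃ y, 0 ≤ y ∧ y < x ∧ P {ω | X ω ∈ Set.Ioo y x} = 0}

/-- `M_-`. -/
def Mminus (P : Measure Ω) (X : Ω → ℝ) : Set ℝ :=
  {x | x < 0 ∧ ∀ y, x < y → 0 < P {ω | X ω ∈ Set.Ico x y}}

/-- `N_-`. -/
def Nminus (P : Measure Ω) (X : Ω → ℝ) : Set ℝ :=
  {x | x < 0 ∧ P {ω | X ω = x} = 0}

/-- `L_-`. -/
def Lminus (P : Measure Ω) (X : Ω → ℝ) : Set ℝ :=
  {x | x < 0 ∧ ∃ y, x < y ∧ y ≤ 0 ∧ P {ω | X ω ∈ Set.Ioo x y} = 0}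

/-- `𝒢_+`. -/
def Gplus (P : Measure Ω) (X : Ω → ℝ) : Set (ℝ × ℝ) :=
  {p | p.1 ∈ Mplus P X ∧ 0 ≤ p.2 ∧ p.2 ≤ 1 ∧
    (p.1 ∈ Nplus P X → p.2 = 1) ∧ (p.1 ∈ Lplus P X → 0 < p.2) ∧
    (P {ω | p.1 < X ω} = 0 → p.1 ∉ Nplus P X ∧ p.2 < 1)}

/-- `𝒢_-`. -/
def Gminus (P : Measure Ω) (X : Ω → ℝ) : Set (ℝ × ℝ) :=
  {p | p.1 ∈ Mminus P X ∧ 0 ≤ p.2 ∧ p.2 ≤ 1 ∧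
    (p.1 ∈ Nminus P X → p.2 = 1) ∧ (p.1 ∈ Lminus P X → 0 < p.2) ∧
    (P {ω | X ω < p.1} = 0 → p.1 ∉ Nminus P X ∧ p.2 < 1)}

/-- `𝒢 := 𝒢_+ ∪ 𝒢_-`. -/
def Gset (P : Measure Ω) (X : Ω → ℝ) : Set (ℝ × ℝ) := Gplus P X ∪ Gminus P X


set_option linter.unusedSectionVars false

section Aux
variable {P : Measure Ω} [IsProbabilityMeasure P] {X : Ω → ℝ}

lemma int_fpos (hXm : Measurable X) (hXint : Integrable X P) (x : ℝ) :
    Integrable (fun ω => if X ω ∈ Set.Ioc (0:ℝ) x then X ω else 0) P := by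
  refine Integrable.mono' hXint.abs ?_ ?_
  · exact (Measurable.ite (hXm measurableSet_Ioc) hXm measurable_const).aestronglyMeasurable
  · filter_upwards with ω
    split_ifs <;> simp [abs_nonneg]

lemma int_fneg (hXm : Measurable X) (hXint : Integrable X P) (x : ℝ) :
    Integrable (fun ω => if X ω ∈ Set.Ico x (0:ℝ) then -(X ω) else 0) P := by
  refine Integrable.mono' hXint.abs ?_ ?_
  · exact (Measurable.ite (hXm measurableSet_Ico) hXm.neg measurable_const).aestronglyMeasurable
  · filter_upwards with ω
    split_ifs <;> simp [abs_nonneg, abs_neg]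

lemma int_pospart (hXm : Measurable X) (hXint : Integrable X P) :
    Integrable (fun ω => if (0:ℝ) < X ω then X ω else 0) P := by
  refine Integrable.mono' hXint.abs ?_ ?_
  · exact (Measurable.ite (hXm measurableSet_Ioi) hXm measurable_const).aestronglyMeasurable
  · filter_upwards with ω
    split_ifs <;> simp [abs_nonneg]

lemma int_negpart (hXm : Measurable X) (hXint : Integrable X P) :
    Integrable (fun ω => if X ω < (0:ℝ) then -(X ω) else 0) P := by
  refine Integrable.mono' hXint.abs ?_ ?_
  · exact (Measurable.ite (hXm measurableSet_Iio) hXm.neg measurable_const).aestronglyMeasurable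
  · filter_upwards with ω
    split_ifs <;> simp [abs_nonneg, abs_neg]

lemma mHalf_nonneg : 0 ≤ mHalf P X := by
  have : 0 ≤ ∫ ω, |X ω| ∂P := integral_nonneg fun ω => abs_nonneg _
  unfold mHalf; linarith

lemma integral_pospart (hXm : Measurable X) (hXint : Integrable X P)
    (hXmean : ∫ ω, X ω ∂P = 0) :
    ∫ ω, (if (0:ℝ) < X ω then X ω else 0) ∂P = mHalf P X := by
  have hfun : ∀ ω, (if (0:ℝ) < X ω then X ω else 0) = (|X ω| + X ω) / 2 := by
    intro ω
    rcases le_or_gt (X ω) 0 with h | h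
    · simp [not_lt.2 h, abs_of_nonpos h]
    · rw [if_pos h, abs_of_pos h]; ring
  rw [show (fun ω => if (0:ℝ) < X ω then X ω else 0) = fun ω => (|X ω| + X ω) / 2
      from funext hfun]
  rw [integral_div, integral_add hXint.abs hXint, hXmean, mHalf]
  ring

lemma integral_negpart (hXm : Measurable X) (hXint : Integrable X P)
    (hXmean : ∫ ω, X ω ∂P = 0) :
    ∫ ω, (if X ω < (0:ℝ) then -(X ω) else 0) ∂P = mHalf P X := by
  have hfun : ∀ ω, (if X ω < (0:ℝ) then -(X ω) else 0) = (|X ω| - X ω) / 2 := by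
    intro ω
    rcases lt_or_ge (X ω) 0 with h | h
    · rw [if_pos h, abs_of_neg h]; ring
    · simp [not_lt.2 h, abs_of_nonneg h]
  rw [show (fun ω => if X ω < (0:ℝ) then -(X ω) else 0) = fun ω => (|X ω| - X ω) / 2
      from funext hfun]
  rw [integral_div, integral_sub hXint.abs hXint, hXmean, mHalf]
  ring

end Aux
section Aux2
variable {P : Measure Ω} [IsProbabilityMeasure P] {X : Ω → ℝ}

lemma G_zero : G P X 0 = 0 := by
  simp [G]

lemma G_nonneg (x : ℝ) : 0 ≤ G P X x := by
  unfold G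
  split_ifs
  · refine integral_nonneg fun ω => ?_
    simp only [Pi.zero_apply]
    by_cases h : X ω ∈ Set.Ioc (0:ℝ) x
    · rw [if_pos h]; exact h.1.le
    · rw [if_neg h]
  · refine integral_nonneg fun ω => ?_
    simp only [Pi.zero_apply]
    by_cases h : X ω ∈ Set.Ico x (0:ℝ)
    · rw [if_pos h]; linarith [h.2]
    · rw [if_neg h]

lemma G_mono_pos (hXm : Measurable X) (hXint : Integrable X P) {x y : ℝ}
    (hx : 0 ≤ x) (hxy : x ≤ y) : G P X x ≤ G P X y := by
  unfold G
  rw [if_pos hx, if_pos (hx.trans hxy)]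
  refine integral_mono (int_fpos hXm hXint x) (int_fpos hXm hXint y) fun ω => ?_
  by_cases h1 : X ω ∈ Set.Ioc (0:ℝ) x
  · rw [if_pos h1, if_pos ⟨h1.1, h1.2.trans hxy⟩]
  · rw [if_neg h1]
    by_cases h2 : X ω ∈ Set.Ioc (0:ℝ) y
    · rw [if_pos h2]; exact h2.1.le
    · rw [if_neg h2]

lemma G_anti_neg (hXm : Measurable X) (hXint : Integrable X P) {x y : ℝ}
    (hxy : x ≤ y) (hy : y < 0) : G P X y ≤ G P X x := by
  unfold G
  rw [if_neg (not_le.2 hy), if_neg (not_le.2 (lt_of_le_of_lt hxy hy))]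
  refine integral_mono (int_fneg hXm hXint y) (int_fneg hXm hXint x) fun ω => ?_
  by_cases h1 : X ω ∈ Set.Ico y (0:ℝ)
  · rw [if_pos h1, if_pos ⟨hxy.trans h1.1, h1.2⟩]
  · rw [if_neg h1]
    by_cases h2 : X ω ∈ Set.Ico x (0:ℝ)
    · rw [if_pos h2]; linarith [h2.2]
    · rw [if_neg h2]

lemma G_le_mHalf (hXm : Measurable X) (hXint : Integrable X P)
    (hXmean : ∫ ω, X ω ∂P = 0) (x : ℝ) : G P X x ≤ mHalf P X := by
  unfold G
  split_ifs
  · rw [← integral_pospart hXm hXint hXmean]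
    refine integral_mono (int_fpos hXm hXint x) (int_pospart hXm hXint) fun ω => ?_
    by_cases h1 : X ω ∈ Set.Ioc (0:ℝ) x
    · rw [if_pos h1, if_pos h1.1]
    · rw [if_neg h1]
      by_cases h2 : (0:ℝ) < X ω
      · rw [if_pos h2]; exact h2.le
      · rw [if_neg h2]
  · rw [← integral_negpart hXm hXint hXmean]
    refine integral_mono (int_fneg hXm hXint x) (int_negpart hXm hXint) fun ω => ?_
    by_cases h1 : X ω ∈ Set.Ico x (0:ℝ)
    · rw [if_pos h1, if_pos h1.2]
    · rw [if_neg h1]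
      by_cases h2 : X ω < (0:ℝ)
      · rw [if_pos h2]; linarith
      · rw [if_neg h2]

lemma G_tendsto_atTop (hXm : Measurable X) (hXint : Integrable X P)
    (hXmean : ∫ ω, X ω ∂P = 0) :
    Tendsto (fun n : ℕ => G P X n) atTop (𝓝 (mHalf P X)) := by
  have heq : ∀ n : ℕ, G P X n = ∫ ω, (if X ω ∈ Set.Ioc (0:ℝ) n then X ω else 0) ∂P := by
    intro n; unfold G; rw [if_pos (Nat.cast_nonneg n)]
  rw [show (fun n : ℕ => G P X n)
      = fun n : ℕ => ∫ ω, (if X ω ∈ Set.Ioc (0:ℝ) n then X ω else 0) ∂P from funext heq,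
    ← integral_pospart hXm hXint hXmean]
  refine tendsto_integral_of_dominated_convergence (fun ω => |X ω|)
    (fun n => (Measurable.ite (hXm measurableSet_Ioc) hXm measurable_const).aestronglyMeasurable)
    hXint.abs (fun n => ?_) ?_
  · filter_upwards with ω
    split_ifs <;> simp [abs_nonneg]
  · filter_upwards with ω
    rcases lt_or_ge 0 (X ω) with h | h
    · rw [if_pos h]
      refine tendsto_const_nhds.congr' ?_
      filter_upwards [eventually_ge_atTop ⌈X ω⌉₊] with n hn
      have : X ω ≤ (n:ℝ) := (Nat.le_ceil _).trans (Nat.cast_le.2 hn)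
      rw [if_pos ⟨h, this⟩]
    · rw [if_neg (not_lt.2 h)]
      refine tendsto_const_nhds.congr fun n => ?_
      rw [if_neg (fun hc => absurd hc.1 (not_lt.2 h))]

lemma G_tendsto_atBot (hXm : Measurable X) (hXint : Integrable X P)
    (hXmean : ∫ ω, X ω ∂P = 0) :
    Tendsto (fun n : ℕ => G P X (-(n+1))) atTop (𝓝 (mHalf P X)) := by
  have heq : ∀ n : ℕ, G P X (-(n+1))
      = ∫ ω, (if X ω ∈ Set.Ico (-(n+1):ℝ) 0 then -(X ω) else 0) ∂P := by
    intro n; unfold G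
    rw [if_neg (not_le.2 (neg_neg_of_pos (by positivity)))]
  rw [show (fun n : ℕ => G P X (-(n+1)))
      = fun n : ℕ => ∫ ω, (if X ω ∈ Set.Ico (-(n+1):ℝ) 0 then -(X ω) else 0) ∂P
      from funext heq,
    ← integral_negpart hXm hXint hXmean]
  refine tendsto_integral_of_dominated_convergence (fun ω => |X ω|)
    (fun n => (Measurable.ite (hXm measurableSet_Ico) hXm.neg
      measurable_const).aestronglyMeasurable)
    hXint.abs (fun n => ?_) ?_
  · filter_upwards with ω
    split_ifs <;> simp [abs_nonneg, abs_neg]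
  · filter_upwards with ω
    rcases lt_or_ge (X ω) 0 with h | h
    · rw [if_pos h]
      refine tendsto_const_nhds.congr' ?_
      filter_upwards [eventually_ge_atTop ⌈-X ω⌉₊] with n hn
      have h1 : -X ω ≤ (n:ℝ) := (Nat.le_ceil _).trans (Nat.cast_le.2 hn)
      have h2 : (-(n+1):ℝ) ≤ X ω := by linarith
      rw [if_pos ⟨h2, h⟩]
    · rw [if_neg (not_lt.2 h)]
      refine tendsto_const_nhds.congr fun n => ?_
      rw [if_neg (fun hc => absurd hc.2 (not_lt.2 h))]

lemma G_tendsto_zero_right (hXm : Measurable X) (hXint : Integrable X P) :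
    Tendsto (fun n : ℕ => G P X (1/(n+1))) atTop (𝓝 0) := by
  have heq : ∀ n : ℕ, G P X (1/(n+1))
      = ∫ ω, (if X ω ∈ Set.Ioc (0:ℝ) (1/(n+1)) then X ω else 0) ∂P := by
    intro n; unfold G; rw [if_pos (by positivity)]
  have key : Tendsto (fun n : ℕ => ∫ ω, (if X ω ∈ Set.Ioc (0:ℝ) (1/(n+1)) then X ω else 0) ∂P)
      atTop (𝓝 (∫ (_ : Ω), (0:ℝ) ∂P)) := by
    refine tendsto_integral_of_dominated_convergence (fun ω => |X ω|)
      (fun n => (Measurable.ite (hXm measurableSet_Ioc) hXm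
        measurable_const).aestronglyMeasurable)
      hXint.abs (fun n => ?_) ?_
    · filter_upwards with ω
      split_ifs <;> simp [abs_nonneg]
    · filter_upwards with ω
      rcases lt_or_ge 0 (X ω) with h | h
      · refine tendsto_const_nhds.congr' ?_
        filter_upwards [eventually_ge_atTop ⌈1 / X ω⌉₊] with n hn
        have h1 : 1 / X ω ≤ (n:ℝ) := (Nat.le_ceil _).trans (Nat.cast_le.2 hn)
        have h2 : (1:ℝ)/(n+1) < X ω := by
          rw [div_lt_iff₀ (by positivity)]
          rw [div_le_iff₀ h] at h1
          nlinarith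
        rw [if_neg (fun hc => absurd hc.2 (not_le.2 h2))]
      · refine tendsto_const_nhds.congr fun n => ?_
        rw [if_neg (fun hc => absurd hc.1 (not_lt.2 h))]
  simp only [integral_zero] at key
  exact key.congr fun n => (heq n).symm

lemma G_tendsto_zero_left (hXm : Measurable X) (hXint : Integrable X P) :
    Tendsto (fun n : ℕ => G P X (-(1/(n+1)))) atTop (𝓝 0) := by
  have hpos : ∀ n : ℕ, (0:ℝ) < 1/((n:ℝ)+1) := fun n => by positivity
  have heq : ∀ n : ℕ, G P X (-(1/(n+1)))
      = ∫ ω, (if X ω ∈ Set.Ico (-(1/(n+1)):ℝ) 0 then -(X ω) else 0) ∂P := by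
    intro n; unfold G
    rw [if_neg (not_le.2 (neg_neg_of_pos (hpos n)))]
  have key : Tendsto
      (fun n : ℕ => ∫ ω, (if X ω ∈ Set.Ico (-(1/(n+1)):ℝ) 0 then -(X ω) else 0) ∂P)
      atTop (𝓝 (∫ (_ : Ω), (0:ℝ) ∂P)) := by
    refine tendsto_integral_of_dominated_convergence (fun ω => |X ω|)
      (fun n => (Measurable.ite (hXm measurableSet_Ico) hXm.neg
        measurable_const).aestronglyMeasurable)
      hXint.abs (fun n => ?_) ?_
    · filter_upwards with ω
      split_ifs <;> simp [abs_nonneg, abs_neg]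
    · filter_upwards with ω
      rcases lt_or_ge (X ω) 0 with h | h
      · refine tendsto_const_nhds.congr' ?_
        filter_upwards [eventually_ge_atTop ⌈1 / (-X ω)⌉₊] with n hn
        have hx : 0 < -X ω := by linarith
        have h1 : 1 / (-X ω) ≤ (n:ℝ) := (Nat.le_ceil _).trans (Nat.cast_le.2 hn)
        have h2 : X ω < -(1/(n+1)) := by
          have : (1:ℝ)/(n+1) < -X ω := by
            rw [div_lt_iff₀ (by positivity)]
            rw [div_le_iff₀ hx] at h1
            nlinarith
          linarith
        rw [if_neg (fun hc => absurd hc.1 (not_le.2 h2))]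
      · refine tendsto_const_nhds.congr fun n => ?_
        rw [if_neg (fun hc => absurd hc.2 (not_lt.2 h))]
  simp only [integral_zero] at key
  exact key.congr fun n => (heq n).symm

end Aux2
section Aux3
variable {P : Measure Ω} [IsProbabilityMeasure P] {X : Ω → ℝ}

lemma ereal_le_of_forall_lt {a b : EReal} (h : ∀ c, b < c → a ≤ c) : a ≤ b := by
  by_contra hb
  push_neg at hb
  obtain ⟨c, hc1, hc2⟩ := exists_between hb
  exact absurd (h c hc1) (not_le.2 hc2)

lemma ereal_ge_of_forall_lt {a b : EReal} (h : ∀ c, c < b → c ≤ a) : b ≤ a := by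
  by_contra hb
  push_neg at hb
  obtain ⟨c, hc1, hc2⟩ := exists_between hb
  exact absurd (h c hc2) (not_le.2 hc1)

lemma real_le_of_forall_lt {a b : ℝ} (h : ∀ c, c < a → c ≤ b) : a ≤ b := by
  by_contra hb
  push_neg at hb
  obtain ⟨c, hc1, hc2⟩ := exists_between hb
  exact absurd (h c hc2) (not_le.2 hc1)

lemma Gbar_coe (x : ℝ) : Gbar P X (x : EReal) = G P X x := by
  rw [Gbar, if_neg (by simp), EReal.toReal_coe]

lemma Gbar_top : Gbar P X ⊤ = mHalf P X := by simp [Gbar]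

lemma Gbar_bot : Gbar P X ⊥ = mHalf P X := by simp [Gbar]

lemma Gbar_nonneg (x : EReal) : 0 ≤ Gbar P X x := by
  induction x using EReal.rec with
  | bot => rw [Gbar_bot]; exact mHalf_nonneg
  | coe r => rw [Gbar_coe]; exact G_nonneg r
  | top => rw [Gbar_top]; exact mHalf_nonneg

lemma Gbar_le_mHalf (hXm : Measurable X) (hXint : Integrable X P)
    (hXmean : ∫ ω, X ω ∂P = 0) (x : EReal) : Gbar P X x ≤ mHalf P X := by
  induction x using EReal.rec with
  | bot => rw [Gbar_bot]
  | coe r => rw [Gbar_coe]; exact G_le_mHalf hXm hXint hXmean r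
  | top => rw [Gbar_top]

lemma Gbar_mono_nonneg (hXm : Measurable X) (hXint : Integrable X P)
    (hXmean : ∫ ω, X ω ∂P = 0) {x y : EReal} (hx : 0 ≤ x) (hxy : x ≤ y) :
    Gbar P X x ≤ Gbar P X y := by
  induction y using EReal.rec with
  | bot => exact absurd (hx.trans hxy) (by simp)
  | coe s =>
    induction x using EReal.rec with
    | bot => exact absurd hx (by simp)
    | coe r =>
      rw [Gbar_coe, Gbar_coe]
      exact G_mono_pos hXm hXint (by exact_mod_cast hx) (by exact_mod_cast hxy)
    | top => exact absurd hxy (by simp)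
  | top => rw [Gbar_top]; exact Gbar_le_mHalf hXm hXint hXmean x

lemma Gbar_anti_nonpos (hXm : Measurable X) (hXint : Integrable X P)
    (hXmean : ∫ ω, X ω ∂P = 0) {x y : EReal} (hxy : x ≤ y) (hy : y ≤ 0) :
    Gbar P X y ≤ Gbar P X x := by
  induction x using EReal.rec with
  | bot => rw [Gbar_bot]; exact Gbar_le_mHalf hXm hXint hXmean y
  | coe r =>
    induction y using EReal.rec with
    | bot => exact absurd hxy (by simp)
    | coe s =>
      rw [Gbar_coe, Gbar_coe]
      have hs : s ≤ 0 := by exact_mod_cast hy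
      rcases eq_or_lt_of_le hs with h0 | h0
      · rw [h0, G_zero]; exact G_nonneg r
      · exact G_anti_neg hXm hXint (by exact_mod_cast hxy) h0
    | top => exact absurd hy (by simp)
  | top =>
    have : y = ⊤ := top_le_iff.1 hxy
    rw [this]

lemma xPlus_nonneg (h : ℝ) : 0 ≤ xPlus P X h :=
  le_sInf fun _ hx => hx.1

lemma xPlus_mono {h₁ h₂ : ℝ} (hh : h₁ ≤ h₂) : xPlus P X h₁ ≤ xPlus P X h₂ :=
  sInf_le_sInf fun x hx => ⟨hx.1, hh.trans hx.2⟩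

lemma top_mem_setA {h : ℝ} (hm : h ≤ mHalf P X) :
    (⊤ : EReal) ∈ {x : EReal | 0 ≤ x ∧ h ≤ Gbar P X x} :=
  ⟨le_top, by rw [Gbar_top]; exact hm⟩

lemma setA_upset (hXm : Measurable X) (hXint : Integrable X P)
    (hXmean : ∫ ω, X ω ∂P = 0) {h : ℝ} {x y : EReal}
    (hx : x ∈ {x : EReal | 0 ≤ x ∧ h ≤ Gbar P X x}) (hxy : x ≤ y) :
    y ∈ {x : EReal | 0 ≤ x ∧ h ≤ Gbar P X x} :=
  ⟨hx.1.trans hxy, hx.2.trans (Gbar_mono_nonneg hXm hXint hXmean hx.1 hxy)⟩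

lemma xPlus_lt_top (hXm : Measurable X) (hXint : Integrable X P)
    (hXmean : ∫ ω, X ω ∂P = 0) {h : ℝ} (hm : h < mHalf P X) :
    xPlus P X h < ⊤ := by
  have := (G_tendsto_atTop hXm hXint hXmean).eventually (eventually_gt_nhds hm)
  obtain ⟨n, hn⟩ := this.exists
  have hle : xPlus P X h ≤ ((n : ℝ) : EReal) :=
    sInf_le ⟨by exact_mod_cast (Nat.cast_nonneg n : (0:ℝ) ≤ n),
      by rw [Gbar_coe]; exact hn.le⟩
  exact lt_of_le_of_lt hle (EReal.coe_lt_top _)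

lemma xPlus_pos (hXm : Measurable X) (hXint : Integrable X P) {h : ℝ} (hpos : 0 < h) :
    0 < xPlus P X h := by
  have := (G_tendsto_zero_right hXm hXint).eventually (eventually_lt_nhds hpos)
  obtain ⟨n, hn⟩ := this.exists
  set δ : ℝ := 1/((n:ℝ)+1) with hδ
  have hδpos : 0 < δ := by positivity
  have hlb : ((δ : ℝ) : EReal) ≤ xPlus P X h := by
    refine le_sInf fun x hx => ?_
    by_contra hc
    push_neg at hc
    have hxtop : x ≠ ⊤ := fun ht => by simp [ht] at hc
    have hxbot : x ≠ ⊥ := fun hb => by simpa [hb] using hx.1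
    set r := x.toReal with hr
    have hxr : x = (r : EReal) := (EReal.coe_toReal hxtop hxbot).symm
    have hr0 : 0 ≤ r := by
      rw [hxr] at hx; exact_mod_cast hx.1
    have hrδ : r ≤ δ := by
      rw [hxr] at hc; exact_mod_cast hc.le
    have : G P X r ≤ G P X δ := G_mono_pos hXm hXint hr0 hrδ
    have hGx : h ≤ G P X r := by
      have := hx.2; rwa [hxr, Gbar_coe] at this
    linarith
  calc (0 : EReal) < ((δ:ℝ) : EReal) := by exact_mod_cast hδpos
    _ ≤ _ := hlb

lemma xPlus_zero : xPlus P X 0 = 0 := by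
  refine le_antisymm ?_ (xPlus_nonneg 0)
  refine sInf_le ⟨le_refl _, ?_⟩
  rw [show ((0:EReal)) = ((0:ℝ):EReal) by norm_cast, Gbar_coe, G_zero]

lemma xPlus_leftcont (hXm : Measurable X) (hXint : Integrable X P)
    (hXmean : ∫ ω, X ω ∂P = 0) {h₀ : ℝ} (hm : h₀ ≤ mHalf P X) {b : EReal}
    (hb : ∀ h', h' < h₀ → xPlus P X h' ≤ b) : xPlus P X h₀ ≤ b := by
  refine ereal_le_of_forall_lt fun c hc => ?_
  have hb0 : 0 ≤ b := le_trans (xPlus_nonneg (h₀ - 1)) (hb _ (by linarith))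
  refine sInf_le ⟨hb0.trans hc.le, ?_⟩
  refine real_le_of_forall_lt fun h' hh' => ?_
  have h1 : sInf {x : EReal | 0 ≤ x ∧ h' ≤ Gbar P X x} < c := lt_of_le_of_lt (hb h' hh') hc
  obtain ⟨y, hy, hyc⟩ := exists_lt_of_csInf_lt ⟨⊤, top_mem_setA (le_trans hh'.le hm)⟩ h1
  exact (setA_upset hXm hXint hXmean hy hyc.le).2

lemma xMinus_nonpos (h : ℝ) : xPlus P X h = xPlus P X h := rfl

lemma xMinus_nonpos' (h : ℝ) : xMinus P X h ≤ 0 :=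
  sSup_le fun _ hx => hx.1

lemma xMinus_anti {h₁ h₂ : ℝ} (hh : h₁ ≤ h₂) : xMinus P X h₂ ≤ xMinus P X h₁ :=
  sSup_le_sSup fun x hx => ⟨hx.1, hh.trans hx.2⟩

lemma bot_mem_setB {h : ℝ} (hm : h ≤ mHalf P X) :
    (⊥ : EReal) ∈ {x : EReal | x ≤ 0 ∧ h ≤ Gbar P X x} :=
  ⟨bot_le, by rw [Gbar_bot]; exact hm⟩

lemma setB_downset (hXm : Measurable X) (hXint : Integrable X P)
    (hXmean : ∫ ω, X ω ∂P = 0) {h : ℝ} {x y : EReal}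
    (hx : x ∈ {x : EReal | x ≤ 0 ∧ h ≤ Gbar P X x}) (hxy : y ≤ x) :
    y ∈ {x : EReal | x ≤ 0 ∧ h ≤ Gbar P X x} :=
  ⟨hxy.trans hx.1, hx.2.trans (Gbar_anti_nonpos hXm hXint hXmean hxy hx.1)⟩

lemma xMinus_gt_bot (hXm : Measurable X) (hXint : Integrable X P)
    (hXmean : ∫ ω, X ω ∂P = 0) {h : ℝ} (hm : h < mHalf P X) :
    ⊥ < xMinus P X h := by
  have := (G_tendsto_atBot hXm hXint hXmean).eventually (eventually_gt_nhds hm)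
  obtain ⟨n, hn⟩ := this.exists
  have hle : ((-(n+1) : ℝ) : EReal) ≤ xMinus P X h :=
    le_sSup ⟨by exact_mod_cast
        (by linarith [Nat.cast_nonneg (α := ℝ) n] : (-(n+1):ℝ) ≤ 0),
      by rw [Gbar_coe]; exact hn.le⟩
  exact lt_of_lt_of_le (EReal.bot_lt_coe _) hle

lemma xMinus_neg (hXm : Measurable X) (hXint : Integrable X P) {h : ℝ} (hpos : 0 < h) :
    xMinus P X h < 0 := by
  have := (G_tendsto_zero_left hXm hXint).eventually (eventually_lt_nhds hpos)
  obtain ⟨n, hn⟩ := this.exists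
  set δ : ℝ := 1/((n:ℝ)+1) with hδ
  have hδpos : 0 < δ := by positivity
  have hub : xMinus P X h ≤ ((-δ : ℝ) : EReal) := by
    refine sSup_le fun x hx => ?_
    by_contra hc
    push_neg at hc
    have hxbot : x ≠ ⊥ := fun hb => by simp [hb] at hc
    have hxtop : x ≠ ⊤ := fun ht => by simpa [ht] using hx.1
    set r := x.toReal with hr
    have hxr : x = (r : EReal) := (EReal.coe_toReal hxtop hxbot).symm
    have hr0 : r ≤ 0 := by rw [hxr] at hx; exact_mod_cast hx.1
    have hrδ : -δ ≤ r := by rw [hxr] at hc; exact_mod_cast hc.le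
    have hGx : h ≤ G P X r := by have := hx.2; rwa [hxr, Gbar_coe] at this
    rcases eq_or_lt_of_le hr0 with h0 | h0
    · rw [h0, G_zero] at hGx; linarith
    · have : G P X r ≤ G P X (-δ) := G_anti_neg hXm hXint hrδ (by linarith)
      linarith
  calc xMinus P X h ≤ ((-δ:ℝ) : EReal) := hub
    _ < 0 := by exact_mod_cast (by linarith : -δ < 0)

lemma xMinus_zero : xMinus P X 0 = 0 := by
  refine le_antisymm (xMinus_nonpos' 0) ?_
  refine le_sSup ⟨le_refl _, ?_⟩
  rw [show ((0:EReal)) = ((0:ℝ):EReal) by norm_cast, Gbar_coe, G_zero]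

lemma xMinus_leftcont (hXm : Measurable X) (hXint : Integrable X P)
    (hXmean : ∫ ω, X ω ∂P = 0) {h₀ : ℝ} (hm : h₀ ≤ mHalf P X) {b : EReal}
    (hb : ∀ h', h' < h₀ → b ≤ xMinus P X h') : b ≤ xMinus P X h₀ := by
  refine ereal_ge_of_forall_lt fun c hc => ?_
  have hb0 : b ≤ 0 := le_trans (hb _ (by linarith : h₀ - 1 < h₀)) (xMinus_nonpos' (h₀ - 1))
  refine le_sSup ⟨hc.le.trans hb0, ?_⟩
  refine real_le_of_forall_lt fun h' hh' => ?_
  have h1 : c < sSup {x : EReal | x ≤ 0 ∧ h' ≤ Gbar P X x} := lt_of_lt_of_le hc (hb h' hh')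
  obtain ⟨y, hy, hyc⟩ := lt_sSup_iff.1 h1
  exact (setB_downset hXm hXint hXmean hy hyc.le).2

end Aux3
section Aux4
variable {P : Measure Ω} [IsProbabilityMeasure P] {X : Ω → ℝ}

lemma wFun_nonneg (h : ℝ) : 0 ≤ wFun P X h := by
  rw [wFun, sub_eq_add_neg]
  have h1 : (0:EReal) ≤ xPlus P X h := xPlus_nonneg h
  have h2 : (0:EReal) ≤ -(xMinus P X h) := by
    rw [show (0:EReal) = -0 by simp]
    exact EReal.neg_le_neg_iff.2 (xMinus_nonpos' h)
  calc (0:EReal) = 0 + 0 := by simp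
    _ ≤ _ := add_le_add h1 h2

lemma wFun_mono {h₁ h₂ : ℝ} (hh : h₁ ≤ h₂) : wFun P X h₁ ≤ wFun P X h₂ :=
  EReal.sub_le_sub (xPlus_mono hh) (xMinus_anti hh)

lemma wFun_zero : wFun P X 0 = 0 := by
  rw [wFun, xPlus_zero, xMinus_zero]; simp

lemma wFun_pos (hXm : Measurable X) (hXint : Integrable X P) {h : ℝ} (hpos : 0 < h) :
    0 < wFun P X h := by
  rw [wFun, sub_eq_add_neg]
  have h1 : (0:EReal) < xPlus P X h := xPlus_pos hXm hXint hpos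
  have h2 : (0:EReal) ≤ -(xMinus P X h) := by
    rw [show (0:EReal) = -0 by simp]
    exact EReal.neg_le_neg_iff.2 (xMinus_nonpos' h)
  calc (0:EReal) < xPlus P X h := h1
    _ = xPlus P X h + 0 := by simp
    _ ≤ _ := add_le_add le_rfl h2

/-- Real representation when `h < m`. -/
lemma wFun_real (hXm : Measurable X) (hXint : Integrable X P)
    (hXmean : ∫ ω, X ω ∂P = 0) {h : ℝ} (hm : h < mHalf P X) :
    ∃ p q : ℝ, xPlus P X h = (p : EReal) ∧ xMinus P X h = (q : EReal) ∧
      0 ≤ p ∧ q ≤ 0 ∧ wFun P X h = ((p - q : ℝ) : EReal) := by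
  have ha1 : xPlus P X h ≠ ⊤ := (xPlus_lt_top hXm hXint hXmean hm).ne
  have ha2 : xPlus P X h ≠ ⊥ := ne_of_gt (lt_of_lt_of_le (show (⊥:EReal) < 0 by simp) (xPlus_nonneg h))
  have hb1 : xMinus P X h ≠ ⊥ := (xMinus_gt_bot hXm hXint hXmean hm).ne'
  have hb2 : xMinus P X h ≠ ⊤ := ne_of_lt (lt_of_le_of_lt (xMinus_nonpos' h) (by simp))
  refine ⟨(xPlus P X h).toReal, (xMinus P X h).toReal,
    (EReal.coe_toReal ha1 ha2).symm, (EReal.coe_toReal hb2 hb1).symm, ?_, ?_, ?_⟩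
  · have := xPlus_nonneg (P := P) (X := X) h
    rw [← EReal.coe_toReal ha1 ha2] at this
    exact_mod_cast this
  · have := xMinus_nonpos' (P := P) (X := X) h
    rw [← EReal.coe_toReal hb2 hb1] at this
    exact_mod_cast this
  · rw [wFun, ← EReal.coe_toReal ha1 ha2, ← EReal.coe_toReal hb2 hb1, ← EReal.coe_sub]
    simp

lemma wFun_top_of (hXm : Measurable X) {h : ℝ}
    (hc : xPlus P X h = ⊤ ∨ xMinus P X h = ⊥) : wFun P X h = ⊤ := by
  rcases hc with hc | hc
  · rw [wFun, hc]
    have : xMinus P X h ≠ ⊤ := ne_of_lt (lt_of_le_of_lt (xMinus_nonpos' h) (by simp))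
    rw [sub_eq_add_neg, EReal.top_add_of_ne_bot]
    simp only [ne_eq, EReal.neg_eq_bot_iff]
    exact this
  · rw [wFun, hc]
    have : xPlus P X h ≠ ⊥ := ne_of_gt (lt_of_lt_of_le (show (⊥:EReal) < 0 by simp) (xPlus_nonneg h))
    rw [sub_eq_add_neg, EReal.neg_bot, EReal.add_top_of_ne_bot this]

/-- Part 1 of the statement, assuming `h₁ ≤ h₂`. -/
lemma part1_le (hXm : Measurable X) (hXint : Integrable X P)
    (hXmean : ∫ ω, X ω ∂P = 0) {h₁ h₂ : ℝ}
    (H1 : h₁ ∈ Set.Icc (0:ℝ) (mHalf P X)) (H2 : h₂ ∈ Set.Icc (0:ℝ) (mHalf P X))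
    (hle : h₁ ≤ h₂) (hw : wFun P X h₂ = wFun P X h₁) :
    xPlus P X h₂ = xPlus P X h₁ ∧ xMinus P X h₂ = xMinus P X h₁ := by
  rcases eq_or_lt_of_le hle with heq | hlt
  · rw [heq]; exact ⟨rfl, rfl⟩
  have hm1 : h₁ < mHalf P X := lt_of_lt_of_le hlt H2.2
  obtain ⟨p₁, q₁, hp₁, hq₁, hp₁0, hq₁0, hw₁⟩ := wFun_real hXm hXint hXmean hm1
  have htop : xPlus P X h₂ ≠ ⊤ ∧ xMinus P X h₂ ≠ ⊥ := by
    constructor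
    · intro hc
      rw [wFun_top_of hXm (Or.inl hc), hw₁] at hw
      exact (EReal.coe_ne_top _) hw.symm
    · intro hc
      rw [wFun_top_of hXm (Or.inr hc), hw₁] at hw
      exact (EReal.coe_ne_top _) hw.symm
  have ha2 : xPlus P X h₂ ≠ ⊥ := ne_of_gt (lt_of_lt_of_le (show (⊥:EReal) < 0 by simp) (xPlus_nonneg h₂))
  have hb2 : xMinus P X h₂ ≠ ⊤ := ne_of_lt (lt_of_le_of_lt (xMinus_nonpos' h₂) (by simp))
  set p₂ := (xPlus P X h₂).toReal with hp2d
  set q₂ := (xMinus P X h₂).toReal with hq2d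
  have hp₂ : xPlus P X h₂ = (p₂ : EReal) := (EReal.coe_toReal htop.1 ha2).symm
  have hq₂ : xMinus P X h₂ = (q₂ : EReal) := (EReal.coe_toReal hb2 htop.2).symm
  have hw₂ : wFun P X h₂ = ((p₂ - q₂ : ℝ) : EReal) := by
    rw [wFun, hp₂, hq₂, ← EReal.coe_sub]
  have hsum : p₂ - q₂ = p₁ - q₁ := by
    rw [hw₂, hw₁] at hw
    exact_mod_cast hw
  have hple : p₁ ≤ p₂ := by
    have := xPlus_mono (P := P) (X := X) hle
    rw [hp₁, hp₂] at this
    exact_mod_cast this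
  have hqle : q₂ ≤ q₁ := by
    have := xMinus_anti (P := P) (X := X) hle
    rw [hq₁, hq₂] at this
    exact_mod_cast this
  have hpe : p₂ = p₁ := by linarith
  have hqe : q₂ = q₁ := by linarith
  rw [hp₁, hp₂, hq₁, hq₂, hpe, hqe]
  exact ⟨rfl, rfl⟩

lemma part1 (hXm : Measurable X) (hXint : Integrable X P)
    (hXmean : ∫ ω, X ω ∂P = 0) {h₁ h₂ : ℝ}
    (H1 : h₁ ∈ Set.Icc (0:ℝ) (mHalf P X)) (H2 : h₂ ∈ Set.Icc (0:ℝ) (mHalf P X))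
    (hw : wFun P X h₂ = wFun P X h₁) :
    xPlus P X h₂ = xPlus P X h₁ ∧ xMinus P X h₂ = xMinus P X h₁ := by
  rcases le_total h₁ h₂ with hle | hle
  · exact part1_le hXm hXint hXmean H1 H2 hle hw
  · obtain ⟨e1, e2⟩ := part1_le hXm hXint hXmean H2 H1 hle hw.symm
    exact ⟨e1.symm, e2.symm⟩

/-- The Lipschitz property in `h`-form. -/
lemma lip_h (hXm : Measurable X) (hXint : Integrable X P)
    (hXmean : ∫ ω, X ω ∂P = 0) {h₁ h₂ : ℝ}
    (H1 : h₁ ∈ Set.Icc (0:ℝ) (mHalf P X)) (H2 : h₂ ∈ Set.Icc (0:ℝ) (mHalf P X))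
    {ε : ℝ} (hε : 0 ≤ ε) (hw : wFun P X h₂ ≤ wFun P X h₁ + (ε : EReal)) :
    xPlus P X h₂ ≤ xPlus P X h₁ + (ε : EReal) ∧
      -(xMinus P X h₂) ≤ -(xMinus P X h₁) + (ε : EReal) := by
  have hε' : (0 : EReal) ≤ (ε : EReal) := by exact_mod_cast hε
  rcases le_total h₂ h₁ with hle | hle
  · constructor
    · calc xPlus P X h₂ ≤ xPlus P X h₁ := xPlus_mono hle
        _ = xPlus P X h₁ + 0 := by simp
        _ ≤ _ := add_le_add le_rfl hε'
    · calc -(xMinus P X h₂) ≤ -(xMinus P X h₁) := EReal.neg_le_neg_iff.2 (xMinus_anti hle)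
        _ = -(xMinus P X h₁) + 0 := by simp
        _ ≤ _ := add_le_add le_rfl hε'
  · rcases eq_or_lt_of_le hle with heq | hlt
    · rw [heq]
      constructor
      · calc xPlus P X h₂ = xPlus P X h₂ + 0 := by simp
          _ ≤ _ := add_le_add le_rfl hε'
      · calc -(xMinus P X h₂) = -(xMinus P X h₂) + 0 := by simp
          _ ≤ _ := add_le_add le_rfl hε'
    have hm1 : h₁ < mHalf P X := lt_of_lt_of_le hlt H2.2
    obtain ⟨p₁, q₁, hp₁, hq₁, hp₁0, hq₁0, hw₁⟩ := wFun_real hXm hXint hXmean hm1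
    have hwfin : wFun P X h₁ + (ε : EReal) = ((p₁ - q₁ + ε : ℝ) : EReal) := by
      rw [hw₁, ← EReal.coe_add]
    have htop : xPlus P X h₂ ≠ ⊤ ∧ xMinus P X h₂ ≠ ⊥ := by
      constructor
      · intro hc
        rw [wFun_top_of hXm (Or.inl hc), hwfin] at hw
        exact absurd hw (not_le.2 (EReal.coe_lt_top _))
      · intro hc
        rw [wFun_top_of hXm (Or.inr hc), hwfin] at hw
        exact absurd hw (not_le.2 (EReal.coe_lt_top _))
    have ha2 : xPlus P X h₂ ≠ ⊥ := ne_of_gt (lt_of_lt_of_le (show (⊥:EReal) < 0 by simp) (xPlus_nonneg h₂))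
    have hb2 : xMinus P X h₂ ≠ ⊤ := ne_of_lt (lt_of_le_of_lt (xMinus_nonpos' h₂) (by simp))
    set p₂ := (xPlus P X h₂).toReal with hp2d
    set q₂ := (xMinus P X h₂).toReal with hq2d
    have hp₂ : xPlus P X h₂ = (p₂ : EReal) := (EReal.coe_toReal htop.1 ha2).symm
    have hq₂ : xMinus P X h₂ = (q₂ : EReal) := (EReal.coe_toReal hb2 htop.2).symm
    have hw₂ : wFun P X h₂ = ((p₂ - q₂ : ℝ) : EReal) := by
      rw [wFun, hp₂, hq₂, ← EReal.coe_sub]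
    have hsum : p₂ - q₂ ≤ p₁ - q₁ + ε := by
      rw [hw₂, hwfin] at hw
      exact_mod_cast hw
    have hple : p₁ ≤ p₂ := by
      have := xPlus_mono (P := P) (X := X) hle
      rw [hp₁, hp₂] at this
      exact_mod_cast this
    have hqle : q₂ ≤ q₁ := by
      have := xMinus_anti (P := P) (X := X) hle
      rw [hq₁, hq₂] at this
      exact_mod_cast this
    constructor
    · rw [hp₁, hp₂, ← EReal.coe_add]
      exact_mod_cast (by linarith : p₂ ≤ p₁ + ε)
    · rw [hq₁, hq₂, ← EReal.coe_neg, ← EReal.coe_neg, ← EReal.coe_add]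
      exact_mod_cast (by linarith : -q₂ ≤ -q₁ + ε)

end Aux4
section Aux5

lemma ereal_ne_top_bot_coe {b : EReal} (h1 : b ≠ ⊤) (h2 : b ≠ ⊥) :
    b = ((b.toReal : ℝ) : EReal) := (EReal.coe_toReal h1 h2).symm

lemma contOn_aux {S : Set EReal} {f : EReal → EReal}
    (h0 : ∀ v ∈ S, 0 ≤ f v)
    (hmono : MonotoneOn f S)
    (hlip : ∀ v₁ ∈ S, ∀ v₂ ∈ S, ∀ ε : ℝ, 0 ≤ ε →
      v₂ ≤ v₁ + (ε : EReal) → f v₂ ≤ f v₁ + (ε : EReal))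
    (hle : ∀ v ∈ S, f v ≤ v)
    (htop : ⊤ ∈ S → ∀ b : ℝ, 0 ≤ b → (b : EReal) < f ⊤ →
      ∃ K : ℝ, ∀ v ∈ S, (K : EReal) < v → (b : EReal) < f v) :
    ContinuousOn f S := by
  intro v₀ hv₀
  have hv0nonneg : (0 : EReal) ≤ v₀ := le_trans (h0 v₀ hv₀) (hle v₀ hv₀)
  rw [ContinuousWithinAt]
  induction v₀ using EReal.rec with
  | bot => exact absurd hv0nonneg (by simp)
  | coe r =>
    have hftop : f (r : EReal) ≠ ⊤ :=
      ne_of_lt (lt_of_le_of_lt (hle _ hv₀) (EReal.coe_lt_top r))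
    have hfbot : f (r : EReal) ≠ ⊥ :=
      ne_of_gt (lt_of_lt_of_le (by simp : (⊥:EReal) < 0) (h0 _ hv₀))
    set D := (f (r : EReal)).toReal with hD
    have hfD : f (r : EReal) = (D : EReal) := ereal_ne_top_bot_coe hftop hfbot
    have hD0 : 0 ≤ D := by
      have := h0 _ hv₀; rw [hfD] at this; exact_mod_cast this
    rw [hfD]
    refine tendsto_order.2 ⟨?_, ?_⟩
    · intro b hb
      rcases lt_or_ge b 0 with hbneg | hbpos
      · filter_upwards [self_mem_nhdsWithin] with v hv
        exact lt_of_lt_of_le hbneg (h0 v hv)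
      · have hbt : b ≠ ⊤ := ne_of_lt (lt_of_lt_of_le hb le_top)
        have hbb : b ≠ ⊥ := fun hc => by rw [hc] at hbpos; exact absurd hbpos (by simp)
        set br := b.toReal with hbr
        have hbeq : b = (br : EReal) := ereal_ne_top_bot_coe hbt hbb
        have hbrD : br < D := by rw [hbeq] at hb; exact_mod_cast hb
        set ε : ℝ := (D - br)/2 with hε
        have hεpos : 0 < ε := by simp only [hε]; linarith
        have hball : Set.Ioo (((r - ε : ℝ)) : EReal) (((r + ε : ℝ)) : EReal)
            ∈ 𝓝[S] ((r : ℝ) : EReal) := by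
          refine nhdsWithin_le_nhds (isOpen_Ioo.mem_nhds ?_)
          constructor <;> exact_mod_cast (by linarith)
        filter_upwards [hball, self_mem_nhdsWithin] with v hvI hvS
        have hvbot : v ≠ ⊥ := ne_of_gt (lt_trans (EReal.bot_lt_coe _) hvI.1)
        have hvtop : v ≠ ⊤ := ne_of_lt (lt_trans hvI.2 (EReal.coe_lt_top _))
        set vr := v.toReal with hvr
        have hveq : v = (vr : EReal) := ereal_ne_top_bot_coe hvtop hvbot
        have hv1 : r - ε < vr := by
          have := hvI.1; rw [hveq] at this; exact_mod_cast this
        have h1 : ((r : ℝ) : EReal) ≤ v + (ε : EReal) := by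
          rw [hveq, ← EReal.coe_add]
          exact_mod_cast (by linarith : r ≤ vr + ε)
        have h2 := hlip v hvS ((r : ℝ) : EReal) hv₀ ε hεpos.le h1
        rw [hfD] at h2
        have h3 : ((D - ε : ℝ) : EReal) ≤ f v := by
          rw [EReal.coe_sub]
          exact EReal.sub_le_of_le_add h2
        calc b = (br : EReal) := hbeq
          _ < ((D - ε : ℝ) : EReal) := by exact_mod_cast (by linarith : br < D - ε)
          _ ≤ f v := h3
    · intro b hb
      by_cases hbt : b = ⊤
      · subst hbt
        have hball : Set.Ioo (((r - 1 : ℝ)) : EReal) (((r + 1 : ℝ)) : EReal)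
            ∈ 𝓝[S] ((r : ℝ) : EReal) := by
          refine nhdsWithin_le_nhds (isOpen_Ioo.mem_nhds ?_)
          constructor <;> exact_mod_cast (by linarith)
        filter_upwards [hball, self_mem_nhdsWithin] with v hvI hvS
        have h1 : v ≤ ((r : ℝ) : EReal) + ((1:ℝ) : EReal) := by
          rw [← EReal.coe_add]; exact hvI.2.le
        have h2 := hlip ((r : ℝ) : EReal) hv₀ v hvS 1 one_pos.le h1
        rw [hfD, ← EReal.coe_add] at h2
        exact lt_of_le_of_lt h2 (EReal.coe_lt_top _)
      · have hbb : b ≠ ⊥ := ne_of_gt ((EReal.bot_lt_coe D).trans hb)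
        set br := b.toReal with hbr
        have hbeq : b = (br : EReal) := ereal_ne_top_bot_coe hbt hbb
        have hbrD : D < br := by rw [hbeq] at hb; exact_mod_cast hb
        set ε : ℝ := (br - D)/2 with hε
        have hεpos : 0 < ε := by simp only [hε]; linarith
        have hball : Set.Ioo (((r - ε : ℝ)) : EReal) (((r + ε : ℝ)) : EReal)
            ∈ 𝓝[S] ((r : ℝ) : EReal) := by
          refine nhdsWithin_le_nhds (isOpen_Ioo.mem_nhds ?_)
          constructor <;> exact_mod_cast (by linarith)
        filter_upwards [hball, self_mem_nhdsWithin] with v hvI hvS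
        have h1 : v ≤ ((r : ℝ) : EReal) + (ε : EReal) := by
          rw [← EReal.coe_add]; exact hvI.2.le
        have h2 := hlip ((r : ℝ) : EReal) hv₀ v hvS ε hεpos.le h1
        rw [hfD, ← EReal.coe_add] at h2
        calc f v ≤ ((D + ε : ℝ) : EReal) := h2
          _ < (br : EReal) := by exact_mod_cast (by linarith : D + ε < br)
          _ = b := hbeq.symm
  | top =>
    refine tendsto_order.2 ⟨?_, ?_⟩
    · intro b hb
      rcases lt_or_ge b 0 with hbneg | hbpos
      · filter_upwards [self_mem_nhdsWithin] with v hv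
        exact lt_of_lt_of_le hbneg (h0 v hv)
      · have hbt : b ≠ ⊤ := ne_of_lt (lt_of_lt_of_le hb le_top)
        have hbb : b ≠ ⊥ := fun hc => by rw [hc] at hbpos; exact absurd hbpos (by simp)
        set br := b.toReal with hbr
        have hbeq : b = (br : EReal) := ereal_ne_top_bot_coe hbt hbb
        have hbr0 : 0 ≤ br := by rw [hbeq] at hbpos; exact_mod_cast hbpos
        obtain ⟨K, hK⟩ := htop hv₀ br hbr0 (by rw [← hbeq]; exact hb)
        filter_upwards [nhdsWithin_le_nhds (isOpen_Ioi.mem_nhds (EReal.coe_lt_top K)),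
          self_mem_nhdsWithin] with v h1 h2
        rw [hbeq]
        exact hK v h2 h1
    · intro b hb
      filter_upwards [self_mem_nhdsWithin] with v hv
      exact lt_of_le_of_lt (hmono hv hv₀ le_top) hb

end Aux5
section Aux6
variable {P : Measure Ω} [IsProbabilityMeasure P] {X : Ω → ℝ}

lemma htop_d (hXm : Measurable X) (hXint : Integrable X P)
    (hXmean : ∫ ω, X ω ∂P = 0) {b : ℝ} {hstar : ℝ}
    (hs : hstar ∈ Set.Icc (0:ℝ) (mHalf P X))
    (hbs : (b : EReal) < xPlus P X hstar) :
    ∃ K : ℝ, ∀ h ∈ Set.Icc (0:ℝ) (mHalf P X),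
      (K : EReal) < wFun P X h → (b : EReal) < xPlus P X h := by
  by_cases hT : ∃ h₀, h₀ ∈ Set.Icc (0:ℝ) (mHalf P X) ∧ xPlus P X h₀ ≤ (b : EReal)
  · obtain ⟨h₀, hh₀, hxh₀⟩ := hT
    set T := {h : ℝ | h ∈ Set.Icc (0:ℝ) (mHalf P X) ∧ xPlus P X h ≤ (b : EReal)} with hTdef
    have hTne : T.Nonempty := ⟨h₀, hh₀, hxh₀⟩
    have hTbdd : BddAbove T := ⟨mHalf P X, fun h hh => hh.1.2⟩
    set hh : ℝ := sSup T with hhdef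
    have hub : ∀ h ∈ T, h ≤ hh := fun h h' => le_csSup hTbdd h'
    have hhm : hh ≤ mHalf P X := csSup_le hTne fun h h' => h'.1.2
    rcases eq_or_lt_of_le hhm with heq | hltm
    · exfalso
      have hxm : xPlus P X (mHalf P X) ≤ (b : EReal) := by
        refine xPlus_leftcont hXm hXint hXmean le_rfl fun h' hh' => ?_
        obtain ⟨h'', hh''T, hlt⟩ := exists_lt_of_lt_csSup hTne (heq ▸ hh')
        exact le_trans (xPlus_mono hlt.le) hh''T.2
      exact absurd (le_trans (xPlus_mono hs.2) hxm) (not_le.2 hbs)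
    · have hqbot : ⊥ < xMinus P X hh := xMinus_gt_bot hXm hXint hXmean hltm
      have hqtop : xMinus P X hh ≠ ⊤ :=
        ne_of_lt (lt_of_le_of_lt (xMinus_nonpos' hh) (by simp))
      set q := (xMinus P X hh).toReal with hq
      have hqeq : xMinus P X hh = (q : EReal) := (EReal.coe_toReal hqtop hqbot.ne').symm
      refine ⟨b - q, fun h hmem hK => ?_⟩
      by_contra hc
      push_neg at hc
      have hhT : h ∈ T := ⟨hmem, hc⟩
      have hwle : wFun P X h ≤ ((b - q : ℝ) : EReal) := by
        rw [wFun, EReal.coe_sub]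
        refine EReal.sub_le_sub hc ?_
        rw [← hqeq]
        exact xMinus_anti (hub h hhT)
      exact absurd hK (not_lt.2 hwle)
  · push_neg at hT
    exact ⟨0, fun h hmem _ => hT h hmem⟩

lemma htop_c (hXm : Measurable X) (hXint : Integrable X P)
    (hXmean : ∫ ω, X ω ∂P = 0) {b : ℝ} {hstar : ℝ}
    (hs : hstar ∈ Set.Icc (0:ℝ) (mHalf P X))
    (hbs : (b : EReal) < -(xMinus P X hstar)) :
    ∃ K : ℝ, ∀ h ∈ Set.Icc (0:ℝ) (mHalf P X),
      (K : EReal) < wFun P X h → (b : EReal) < -(xMinus P X h) := by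
  by_cases hT : ∃ h₀, h₀ ∈ Set.Icc (0:ℝ) (mHalf P X) ∧ -(xMinus P X h₀) ≤ (b : EReal)
  · obtain ⟨h₀, hh₀, hxh₀⟩ := hT
    set T := {h : ℝ | h ∈ Set.Icc (0:ℝ) (mHalf P X) ∧ -(xMinus P X h) ≤ (b : EReal)}
      with hTdef
    have hTne : T.Nonempty := ⟨h₀, hh₀, hxh₀⟩
    have hTbdd : BddAbove T := ⟨mHalf P X, fun h hh => hh.1.2⟩
    set hh : ℝ := sSup T with hhdef
    have hub : ∀ h ∈ T, h ≤ hh := fun h h' => le_csSup hTbdd h'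
    have hhm : hh ≤ mHalf P X := csSup_le hTne fun h h' => h'.1.2
    rcases eq_or_lt_of_le hhm with heq | hltm
    · exfalso
      have hxm : ((-b : ℝ) : EReal) ≤ xMinus P X (mHalf P X) := by
        refine xMinus_leftcont hXm hXint hXmean le_rfl fun h' hh' => ?_
        obtain ⟨h'', hh''T, hlt⟩ := exists_lt_of_lt_csSup hTne (heq ▸ hh')
        have h1 : ((-b : ℝ) : EReal) ≤ xMinus P X h'' := by
          rw [EReal.coe_neg]
          exact EReal.neg_le.1 hh''T.2
        exact le_trans h1 (xMinus_anti hlt.le)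
      have h2 : -(xMinus P X hstar) ≤ (b : EReal) := by
        have h3 : ((-b : ℝ) : EReal) ≤ xMinus P X hstar :=
          le_trans hxm (xMinus_anti hs.2)
        rw [EReal.coe_neg] at h3
        exact EReal.neg_le_of_neg_le h3
      exact absurd h2 (not_le.2 hbs)
    · have hptop : xPlus P X hh ≠ ⊤ := (xPlus_lt_top hXm hXint hXmean hltm).ne
      have hpbot : xPlus P X hh ≠ ⊥ :=
        ne_of_gt (lt_of_lt_of_le (show (⊥:EReal) < 0 by simp) (xPlus_nonneg hh))
      set p := (xPlus P X hh).toReal with hp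
      have hpeq : xPlus P X hh = (p : EReal) := (EReal.coe_toReal hptop hpbot).symm
      refine ⟨p + b, fun h hmem hK => ?_⟩
      by_contra hc
      push_neg at hc
      have hhT : h ∈ T := ⟨hmem, hc⟩
      have hwle : wFun P X h ≤ ((p + b : ℝ) : EReal) := by
        rw [wFun, sub_eq_add_neg, EReal.coe_add]
        refine add_le_add ?_ hc
        rw [← hpeq]
        exact xPlus_mono (hub h hhT)
      exact absurd hK (not_lt.2 hwle)
  · push_neg at hT
    exact ⟨0, fun h hmem _ => hT h hmem⟩

end Aux6
/-- Lemma `x+- cont of w` of the paper. The Lipschitz property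
(with constant `≤ 1`) is stated in the subtraction-free form
`v₂ ≤ v₁ + ε → d v₂ ≤ d v₁ + ε`, its correct rendering in the extended real line. -/
theorem c_d_functions_of_w
    (P : Measure Ω) [IsProbabilityMeasure P] (X : Ω → ℝ)
    (hXm : Measurable X) (hXint : Integrable X P)
    (hXmean : ∫ ω, X ω ∂P = 0) (hX0 : P {ω | X ω = 0} ≠ 1) :
    (∀ h₁ ∈ Set.Icc (0:ℝ) (mHalf P X), ∀ h₂ ∈ Set.Icc (0:ℝ) (mHalf P X),
      wFun P X h₂ = wFun P X h₁ →
        xPlus P X h₂ = xPlus P X h₁ ∧ xMinus P X h₂ = xMinus P X h₁) ∧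
    ∃ c d : EReal → EReal,
      (∀ v ∈ V P X ∪ {0}, c v ≤ 0 ∧ 0 ≤ d v) ∧
      MonotoneOn d (V P X ∪ {0}) ∧
      MonotoneOn (fun v => -(c v)) (V P X ∪ {0}) ∧
      ContinuousOn d (V P X ∪ {0}) ∧
      ContinuousOn (fun v => -(c v)) (V P X ∪ {0}) ∧
      (∀ v ∈ V P X ∪ {0}, (d v = 0 ↔ v = 0) ∧ (c v = 0 ↔ v = 0)) ∧
      (∀ v₁ ∈ V P X ∪ {0}, ∀ v₂ ∈ V P X ∪ {0}, ∀ ε : ℝ, 0 ≤ ε →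
        v₂ ≤ v₁ + (ε : EReal) →
          d v₂ ≤ d v₁ + (ε : EReal) ∧ -(c v₂) ≤ -(c v₁) + (ε : EReal)) ∧
      ∀ h ∈ Set.Icc (0:ℝ) (mHalf P X),
        xPlus P X h = d (wFun P X h) ∧ xMinus P X h = c (wFun P X h) ∧
        d (wFun P X h) - c (wFun P X h) = wFun P X h := by
  classical
  have part1' : ∀ h₁ ∈ Set.Icc (0:ℝ) (mHalf P X), ∀ h₂ ∈ Set.Icc (0:ℝ) (mHalf P X),
      wFun P X h₂ = wFun P X h₁ →
        xPlus P X h₂ = xPlus P X h₁ ∧ xMinus P X h₂ = xMinus P X h₁ :=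
    fun h₁ H1 h₂ H2 hw => part1 hXm hXint hXmean H1 H2 hw
  refine ⟨part1', ?_⟩
  have hrep : ∀ v : EReal, v ∈ V P X ∪ {(0:EReal)} →
      ∃ h : ℝ, h ∈ Set.Icc (0:ℝ) (mHalf P X) ∧ wFun P X h = v := by
    intro v hv
    rcases hv with hv | hv
    · obtain ⟨h, hh, hwh⟩ := hv
      exact ⟨h, ⟨hh.1.le, hh.2⟩, hwh⟩
    · refine ⟨0, ⟨le_refl 0, mHalf_nonneg⟩, ?_⟩
      rw [wFun_zero]
      exact (Set.mem_singleton_iff.1 hv).symm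
  choose! rep hrep_mem hrep_eq using hrep
  have hmemS : ∀ h ∈ Set.Icc (0:ℝ) (mHalf P X), wFun P X h ∈ V P X ∪ {(0:EReal)} := by
    intro h hh
    rcases eq_or_lt_of_le hh.1 with h0 | h0
    · right
      rw [← h0, wFun_zero]
      rfl
    · left
      exact ⟨h, ⟨h0, hh.2⟩, rfl⟩
  have bridge : ∀ h ∈ Set.Icc (0:ℝ) (mHalf P X),
      xPlus P X (rep (wFun P X h)) = xPlus P X h ∧
      xMinus P X (rep (wFun P X h)) = xMinus P X h := by
    intro h hh
    exact part1' h hh (rep (wFun P X h)) (hrep_mem _ (hmemS h hh)) (hrep_eq _ (hmemS h hh))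
  set S := V P X ∪ {(0:EReal)} with hSdef
  set d : EReal → EReal := fun v => xPlus P X (rep v) with hddef
  set c : EReal → EReal := fun v => xMinus P X (rep v) with hcdef
  have hsign : ∀ v ∈ S, c v ≤ 0 ∧ 0 ≤ d v :=
    fun v _ => ⟨xMinus_nonpos' _, xPlus_nonneg _⟩
  have hmonod : MonotoneOn d S := by
    intro v₁ h1 v₂ h2 hle12
    rcases le_total (rep v₁) (rep v₂) with hc | hc
    · exact xPlus_mono hc
    · have hww : wFun P X (rep v₂) = wFun P X (rep v₁) :=
        le_antisymm (wFun_mono hc)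
          (by rw [hrep_eq _ h1, hrep_eq _ h2]; exact hle12)
      exact le_of_eq (part1' _ (hrep_mem _ h1) _ (hrep_mem _ h2) hww).1.symm
  have hmonoc : MonotoneOn (fun v => -(c v)) S := by
    intro v₁ h1 v₂ h2 hle12
    rcases le_total (rep v₁) (rep v₂) with hc | hc
    · exact EReal.neg_le_neg_iff.2 (xMinus_anti hc)
    · have hww : wFun P X (rep v₂) = wFun P X (rep v₁) :=
        le_antisymm (wFun_mono hc)
          (by rw [hrep_eq _ h1, hrep_eq _ h2]; exact hle12)
      have := (part1' _ (hrep_mem _ h1) _ (hrep_mem _ h2) hww).2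
      simp only [hcdef]
      rw [this]
  have hlipS : ∀ v₁ ∈ S, ∀ v₂ ∈ S, ∀ ε : ℝ, 0 ≤ ε → v₂ ≤ v₁ + (ε : EReal) →
      d v₂ ≤ d v₁ + (ε : EReal) ∧ -(c v₂) ≤ -(c v₁) + (ε : EReal) := by
    intro v₁ h1 v₂ h2 ε hε hle12
    have hw : wFun P X (rep v₂) ≤ wFun P X (rep v₁) + (ε : EReal) := by
      rw [hrep_eq _ h1, hrep_eq _ h2]
      exact hle12
    exact lip_h hXm hXint hXmean (hrep_mem _ h1) (hrep_mem _ h2) hε hw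
  have hled : ∀ v ∈ S, d v ≤ v := by
    intro v hv
    conv_rhs => rw [← hrep_eq v hv]
    rw [wFun, sub_eq_add_neg]
    calc d v = d v + 0 := by simp
      _ ≤ xPlus P X (rep v) + -(xMinus P X (rep v)) := by
          refine add_le_add le_rfl ?_
          rw [show (0:EReal) = -0 by simp]
          exact EReal.neg_le_neg_iff.2 (xMinus_nonpos' _)
  have hlec : ∀ v ∈ S, -(c v) ≤ v := by
    intro v hv
    conv_rhs => rw [← hrep_eq v hv]
    rw [wFun, sub_eq_add_neg]
    calc -(c v) = 0 + -(c v) := by simp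
      _ ≤ xPlus P X (rep v) + -(xMinus P X (rep v)) :=
          add_le_add (xPlus_nonneg _) le_rfl
  have hcontd : ContinuousOn d S := by
    refine contOn_aux (fun v hv => (hsign v hv).2) hmonod
      (fun v₁ h1 v₂ h2 ε hε hl => (hlipS v₁ h1 v₂ h2 ε hε hl).1) hled ?_
    intro htopS b hb0 hbd
    obtain ⟨K, hK⟩ := htop_d hXm hXint hXmean (hrep_mem ⊤ htopS) hbd
    refine ⟨K, fun v hv hKv => ?_⟩
    exact hK (rep v) (hrep_mem v hv) (by rw [hrep_eq v hv]; exact hKv)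
  have hcontc : ContinuousOn (fun v => -(c v)) S := by
    refine contOn_aux (fun v hv => ?_) hmonoc
      (fun v₁ h1 v₂ h2 ε hε hl => (hlipS v₁ h1 v₂ h2 ε hε hl).2) hlec ?_
    · show (0:EReal) ≤ -(c v)
      rw [show (0:EReal) = -0 by simp]
      exact EReal.neg_le_neg_iff.2 (hsign v hv).1
    · intro htopS b hb0 hbd
      obtain ⟨K, hK⟩ := htop_c hXm hXint hXmean (hrep_mem ⊤ htopS) hbd
      refine ⟨K, fun v hv hKv => ?_⟩
      exact hK (rep v) (hrep_mem v hv) (by rw [hrep_eq v hv]; exact hKv)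
  have hzero : ∀ v ∈ S, (d v = 0 ↔ v = 0) ∧ (c v = 0 ↔ v = 0) := by
    intro v hv
    have hmem := hrep_mem v hv
    have heqv := hrep_eq v hv
    have hback : v = 0 → d v = 0 ∧ c v = 0 := by
      intro hv0
      have hw0 : wFun P X (rep v) = wFun P X 0 := by
        rw [wFun_zero, heqv, hv0]
      have := part1' 0 ⟨le_rfl, mHalf_nonneg⟩ (rep v) hmem hw0
      exact ⟨this.1.trans xPlus_zero, this.2.trans xMinus_zero⟩
    constructor
    · constructor
      · intro hd0
        have hnotpos : ¬ 0 < rep v :=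
          fun hcp => absurd hd0 (ne_of_gt (xPlus_pos hXm hXint hcp))
        have h0 : rep v = 0 := le_antisymm (not_lt.1 hnotpos) hmem.1
        rw [← heqv, h0, wFun_zero]
      · intro hv0
        exact (hback hv0).1
    · constructor
      · intro hc0
        have hnotpos : ¬ 0 < rep v :=
          fun hcp => absurd hc0 (ne_of_lt (xMinus_neg hXm hXint hcp))
        have h0 : rep v = 0 := le_antisymm (not_lt.1 hnotpos) hmem.1
        rw [← heqv, h0, wFun_zero]
      · intro hv0
        exact (hback hv0).2
  refine ⟨c, d, hsign, hmonod, hmonoc, hcontd, hcontc, hzero, hlipS, ?_⟩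
  intro h hh
  obtain ⟨e1, e2⟩ := bridge h hh
  refine ⟨e1.symm, e2.symm, ?_⟩
  show d (wFun P X h) - c (wFun P X h) = wFun P X h
  rw [show d (wFun P X h) = xPlus P X (rep (wFun P X h)) from rfl,
    show c (wFun P X h) = xMinus P X (rep (wFun P X h)) from rfl, e1, e2]
  rfl

end PinelisTtest
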